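/- arXiv:1312.7569 — 3 statements merged into one kernel-verified Lean document; each statement's English description precedes it below -/
import Mathlib

section
/- Let p be a prime, let p' be the smallest prime greater than p, let g be a positive even integer, and let j ≥ 1 be an integer with j + 1 < p' - 1 and g < 2p'. Then n_{g,j}(p') = (p' - j - 1) · n_{g,j}(p) + j · n_{g,j+1}(p). -/
open Finset

/-- `b` is the next totative of `P` after `a`: `a < b`, `b` is coprime to `P`,
and no integer strictly between `a` and `b` is coprime to `P`. -/
def IsNextTot (P a b : ℕ) : Prop :=
  a < b ∧ Nat.Coprime b P ∧ ∀ x, a < x → x < b → ¬ Nat.Coprime x P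

/-- Starting at `r`, the successive totatives of `P` after `r` occur at the
successive partial sums of the list of gaps `c`. -/
def MatchesGaps (P : ℕ) : ℕ → List ℕ → Prop
  | _, [] => True
  | r, c :: cs => IsNextTot P r (r + c) ∧ MatchesGaps P (r + c) cs

open scoped Classical in
/-- `Ncount p s` : the number of (cyclic) occurrences of the constellation `s`
in the cycle of gaps `𝒢(p#)`.  Since the pattern of coprimality to `p#` is
periodic with period `p#`, this is the number of totatives `r ∈ [1, p#]` of `p#`
at which the gap pattern `s` begins. -/
noncomputable def Ncount (p : ℕ) (s : List ℕ) : ℕ :=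
  ((Finset.Icc 1 (primorial p)).filter
    (fun r => Nat.Coprime r (primorial p) ∧ MatchesGaps (primorial p) r s)).card

open scoped Classical in
/-- `nCount p g j` : the number of (cyclic) occurrences in `𝒢(p#)` of
constellations of length `j` with sum `g` (the driving terms of length `j`
for the gap `g`). -/
noncomputable def nCount (p g j : ℕ) : ℕ :=
  ((Finset.Icc 1 (primorial p)).filter
    (fun r => Nat.Coprime r (primorial p) ∧
      ∃ c : List ℕ, c.length = j ∧ c.sum = g ∧ MatchesGaps (primorial p) r c)).card

/-!
Write `P = p#` and `q = p'`, so that `p'# = q * P` and every `r ∈ [1, q * P]` is uniquely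
`s + k * P` with `s ∈ [1, P]` and `k < q`. The totatives of `q * P` in a window
`(s + k * P, s + k * P + g]` are the translates of the totatives `y` of `P` in `(s, s + g]` with
`q ∤ y + k * P`. The point `s` together with these totatives of `P` are odd numbers spanning
less than `2 * q`, so they are pairwise incongruent mod `q`: each `k` removes at most one of
them, and each is removed by exactly one `k < q`. A constellation of length `j` for `q * P`
therefore comes either from one of length `j` for `P` in which nothing is removed
(`q - j - 1` choices of `k`), or from one of length `j + 1` in which exactly one interior
totative is removed (`j` choices).
-/

lemma card_filter_coprime_Ioc_of_isNextTot {P a b c : ℕ} (h : IsNextTot P a b) (hbc : b ≤ c) :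
    #{x ∈ Ioc a c | x.Coprime P} = #{x ∈ Ioc b c | x.Coprime P} + 1 := by
  obtain ⟨hab, hb, hgap⟩ := h
  have hfirst : {x ∈ Ioc a b | x.Coprime P} = {b} := by
    ext x
    simp only [mem_filter, mem_Ioc, mem_singleton]
    constructor
    · rintro ⟨⟨hax, hxb⟩, hx⟩
      by_contra hne
      exact hgap x hax (lt_of_le_of_ne hxb hne) hx
    · rintro rfl
      exact ⟨⟨hab, le_rfl⟩, hb⟩
  rw [← Ioc_union_Ioc_eq_Ioc hab.le hbc, filter_union,
    card_union_of_disjoint (disjoint_filter_filter (Ioc_disjoint_Ioc_of_le le_rfl)), hfirst,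
    card_singleton, add_comm]

lemma MatchesGaps.coprime_and_card {P : ℕ} :
    ∀ {r : ℕ} (c : List ℕ), r.Coprime P → MatchesGaps P r c →
      (r + c.sum).Coprime P ∧ #{x ∈ Ioc r (r + c.sum) | x.Coprime P} = c.length
  | r, [], hr, _ => by simpa using hr
  | r, a :: cs, _, ⟨hnext, hrest⟩ => by
    obtain ⟨hend, hcard⟩ := coprime_and_card cs hnext.2.1 hrest
    rw [List.sum_cons, ← add_assoc, List.length_cons, ← hcard]
    exact ⟨hend, card_filter_coprime_Ioc_of_isNextTot hnext (Nat.le_add_right _ _)⟩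

lemma exists_matchesGaps_of_card {P : ℕ} :
    ∀ (j : ℕ) {r e : ℕ}, r ≤ e → e.Coprime P → #{x ∈ Ioc r e | x.Coprime P} = j →
      ∃ c : List ℕ, c.length = j ∧ r + c.sum = e ∧ MatchesGaps P r c
  | 0, r, e, hre, he, hcard => by
    obtain rfl : r = e := by
      by_contra hne
      have : e ∈ {x ∈ Ioc r e | x.Coprime P} := by
        simp only [mem_filter, mem_Ioc]
        exact ⟨⟨lt_of_le_of_ne hre hne, le_rfl⟩, he⟩
      exact (card_pos.mpr ⟨e, this⟩).ne' hcard
    exact ⟨[], rfl, by simp, trivial⟩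
  | j + 1, r, e, _, he, hcard => by
    have hne : ({x ∈ Ioc r e | x.Coprime P} : Finset ℕ).Nonempty := by
      rw [← card_pos, hcard]; exact j.succ_pos
    set b := min' _ hne
    obtain ⟨hbI, hb⟩ := mem_filter.mp (min'_mem _ hne)
    obtain ⟨hrb, hbe⟩ := mem_Ioc.mp hbI
    have hnext : IsNextTot P r b := by
      refine ⟨hrb, hb, fun x hrx hxb hx => ?_⟩
      have := min'_le {x ∈ Ioc r e | x.Coprime P} x
        (mem_filter.mpr ⟨mem_Ioc.mpr ⟨hrx, hxb.le.trans hbe⟩, hx⟩)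
      exact absurd hxb (not_lt.mpr this)
    rw [card_filter_coprime_Ioc_of_isNextTot hnext hbe, Nat.add_right_cancel_iff] at hcard
    obtain ⟨c, hlen, hsum, hc⟩ := exists_matchesGaps_of_card j hbe he hcard
    have hrb' : r + (b - r) = b := Nat.add_sub_cancel' hrb.le
    refine ⟨(b - r) :: c, by simp [hlen], ?_, ?_⟩
    · rw [List.sum_cons, ← add_assoc, hrb', hsum]
    · change IsNextTot P r (r + (b - r)) ∧ MatchesGaps P (r + (b - r)) c
      rw [hrb']
      exact ⟨hnext, hc⟩

theorem exists_matchesGaps_iff {P r : ℕ} (hr : r.Coprime P) (g j : ℕ) :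
    (∃ c : List ℕ, c.length = j ∧ c.sum = g ∧ MatchesGaps P r c) ↔
      (r + g).Coprime P ∧ #{x ∈ Ioc r (r + g) | x.Coprime P} = j := by
  constructor
  · rintro ⟨c, rfl, rfl, hc⟩
    exact hc.coprime_and_card c hr
  · rintro ⟨hend, hcard⟩
    obtain ⟨c, hlen, hsum, hc⟩ := exists_matchesGaps_of_card j (Nat.le_add_right r g) hend hcard
    exact ⟨c, hlen, Nat.add_left_cancel hsum, hc⟩

lemma primorial_eq_mul_primorial_of_no_prime_between {p p' : ℕ} (hp' : p'.Prime) (hlt : p < p')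
    (hmin : ∀ q : ℕ, q.Prime → p < q → p' ≤ q) : primorial p' = p' * primorial p := by
  have hprimes : Nat.primesLE p' = insert p' (Nat.primesLE p) := by
    ext q
    simp only [mem_insert, Nat.mem_primesLE]
    constructor
    · rintro ⟨hqp', hq⟩
      rcases le_or_gt q p with hqp | hpq
      · exact Or.inr ⟨hqp, hq⟩
      · exact Or.inl (le_antisymm hqp' (hmin q hq hpq))
    · rintro (rfl | ⟨hqp, hq⟩)
      exacts [⟨le_rfl, hp'⟩, ⟨hqp.trans hlt.le, hq⟩]
  rw [primorial_eq_prod_primesLE, hprimes,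
    prod_insert (fun h => (Nat.le_of_mem_primesLE h).not_gt hlt), ← primorial_eq_prod_primesLE]

lemma Nat.Prime.coprime_add_mul_mul_iff {q : ℕ} (hq : q.Prime) (P y k : ℕ) :
    (y + k * P).Coprime (q * P) ↔ ¬ q ∣ y + k * P ∧ y.Coprime P := by
  rw [Nat.coprime_mul_iff_right, Nat.coprime_add_mul_right_left, Nat.coprime_comm,
    hq.coprime_iff_not_dvd]

lemma card_filter_coprime_Ioc_add_mul {q : ℕ} (hq : q.Prime) (P s g k : ℕ) :
    #{x ∈ Ioc (s + k * P) (s + k * P + g) | x.Coprime (q * P)} =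
      #{y ∈ Ioc s (s + g) | y.Coprime P ∧ ¬ q ∣ y + k * P} := by
  rw [add_right_comm, ← map_add_right_Ioc, filter_map, card_map]
  congr 1
  refine filter_congr fun y _ => ?_
  simp only [Function.comp_apply, addRightEmbedding_apply, hq.coprime_add_mul_mul_iff, and_comm]

lemma card_filter_Icc_one_mul (pred : ℕ → Prop) [DecidablePred pred] (P q : ℕ) :
    #{r ∈ Icc 1 (q * P) | pred r} = ∑ s ∈ Icc 1 P, #{k ∈ range q | pred (s + k * P)} := by
  simp only [card_filter]
  rw [sum_comm]
  induction q with
  | zero => simp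
  | succ q ih =>
    have hIcc (n : ℕ) : Icc 1 n = Ioc 0 n := Icc_add_one_left_eq_Ioc 0 n
    have hshift : Ioc (q * P) (q * P + P) = (Ioc 0 P).map (addRightEmbedding (q * P)) := by
      rw [map_add_right_Ioc, zero_add, add_comm]
    rw [sum_range_succ, ← ih, add_mul, one_mul, hIcc, hIcc, hIcc,
      ← Ioc_union_Ioc_eq_Ioc (Nat.zero_le _) (Nat.le_add_right _ P),
      sum_union (Ioc_disjoint_Ioc_of_le le_rfl), hshift, sum_map]
    rfl

/-- The unique `k < q` with `q ∣ y + k * P`, when `P` is invertible mod `q`. -/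
noncomputable def hitIndex (q P y : ℕ) : ℕ := (-(y : ZMod q) * (P : ZMod q)⁻¹).val

lemma hitIndex_lt {q : ℕ} [NeZero q] (P y : ℕ) : hitIndex q P y < q := ZMod.val_lt _

lemma dvd_add_mul_iff_eq_hitIndex {q P k : ℕ} [NeZero q] (hPq : P.Coprime q) (hk : k < q)
    (y : ℕ) : q ∣ y + k * P ↔ k = hitIndex q P y := by
  have hunit : (P : ZMod q) * (P : ZMod q)⁻¹ = 1 :=
    ZMod.mul_inv_of_unit _ ((ZMod.isUnit_iff_coprime P q).mpr hPq)
  rw [← ZMod.natCast_eq_zero_iff, hitIndex]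
  push_cast
  constructor
  · intro h
    rw [← ZMod.val_cast_of_lt hk]
    congr 1
    linear_combination (P : ZMod q)⁻¹ * h - (k : ZMod q) * hunit
  · intro h
    rw [h, ZMod.natCast_zmod_val]
    linear_combination (-(y : ZMod q)) * hunit

lemma eq_of_modEq_of_odd {q y z : ℕ} (hq : Odd q) (hy : Odd y) (hz : Odd z) (hyz : y ≤ z)
    (hzq : z < y + 2 * q) (h : y ≡ z [MOD q]) : y = z := by
  obtain ⟨t, ht⟩ := (Nat.modEq_iff_dvd' hyz).mp h
  have ht2 : t < 2 := by
    by_contra! h2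
    have := Nat.mul_le_mul_left q h2
    omega
  obtain ⟨a, rfl⟩ := hq
  obtain ⟨b, rfl⟩ := hy
  obtain ⟨c, rfl⟩ := hz
  interval_cases t <;> omega

theorem card_filter_forall_ne_and_card_filter_ne {α β : Type*} [DecidableEq α] [DecidableEq β]
    {f : α → β} {A D : Finset α} {t : Finset β} (hf : Set.InjOn f A) (hft : Set.MapsTo f A t)
    (hD : D ⊆ A) (n : ℕ) :
    #{k ∈ t | (∀ a ∈ D, f a ≠ k) ∧ #{a ∈ A | f a ≠ k} = n} =
      if n = #A then #t - #A else if n + 1 = #A then #A - #D else 0 := by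
  have hmiss (k : β) : #{a ∈ A | f a ≠ k} = #A - if k ∈ A.image f then 1 else 0 := by
    have hsplit : #{a ∈ A | f a = k} + #{a ∈ A | f a ≠ k} = #A :=
      card_filter_add_card_filter_not _
    have hhit : #{a ∈ A | f a = k} = if k ∈ A.image f then 1 else 0 := by
      split_ifs with hk
      · obtain ⟨a, ha, rfl⟩ := mem_image.mp hk
        rw [card_eq_one]
        exact ⟨a, eq_singleton_iff_unique_mem.mpr ⟨mem_filter.mpr ⟨ha, rfl⟩,
          fun b hb => hf (mem_filter.mp hb).1 ha (mem_filter.mp hb).2⟩⟩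
      · rw [card_eq_zero, filter_eq_empty_iff]
        exact fun a ha hak => hk (mem_image.mpr ⟨a, ha, hak⟩)
    omega
  have himage : A.image f ⊆ t := fun k hk => by
    obtain ⟨a, ha, rfl⟩ := mem_image.mp hk
    exact hft ha
  split_ifs with hn hn'
  · have : {k ∈ t | (∀ a ∈ D, f a ≠ k) ∧ #{a ∈ A | f a ≠ k} = n} = t \ A.image f := by
      ext k
      simp only [mem_filter, mem_sdiff, hmiss]
      constructor
      · rintro ⟨hkt, -, hk⟩
        refine ⟨hkt, fun hmem => ?_⟩
        rw [if_pos hmem] at hk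
        have : 0 < #A := card_pos.mpr ((image_nonempty).mp ⟨k, hmem⟩)
        omega
      · rintro ⟨hkt, hk⟩
        refine ⟨hkt, fun a ha hak => hk (mem_image.mpr ⟨a, hD ha, hak⟩), ?_⟩
        rw [if_neg hk]
        omega
    rw [this, card_sdiff_of_subset himage, card_image_of_injOn hf]
  · have : {k ∈ t | (∀ a ∈ D, f a ≠ k) ∧ #{a ∈ A | f a ≠ k} = n} = (A \ D).image f := by
      ext k
      simp only [mem_filter, hmiss, mem_image (s := A \ D), mem_sdiff]
      constructor
      · rintro ⟨-, hkD, hk⟩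
        split_ifs at hk with hmem
        · obtain ⟨a, ha, rfl⟩ := mem_image.mp hmem
          exact ⟨a, ⟨ha, fun haD => hkD a haD rfl⟩, rfl⟩
        · omega
      · rintro ⟨a, ⟨ha, haD⟩, rfl⟩
        refine ⟨hft ha, fun d hd hda => haD (hf (hD hd) ha hda ▸ hd), ?_⟩
        rw [if_pos (mem_image_of_mem f ha)]
        omega
    rw [this, card_image_of_injOn (hf.mono (by simp)), card_sdiff_of_subset hD]
  · rw [card_eq_zero, filter_eq_empty_iff]
    rintro k - ⟨-, hk⟩
    rw [hmiss] at hk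
    split_ifs at hk <;> omega

lemma hitIndex_injOn {q P : ℕ} [NeZero q] (hq : Odd q) (hPq : P.Coprime q) {S : Set ℕ}
    (hodd : ∀ a ∈ S, Odd a) (hspan : ∀ a ∈ S, ∀ b ∈ S, b < a + 2 * q) :
    Set.InjOn (hitIndex q P) S := by
  have hdvd (y : ℕ) : q ∣ y + hitIndex q P y * P :=
    (dvd_add_mul_iff_eq_hitIndex hPq (hitIndex_lt P y) y).mpr rfl
  have hmodEq {y z : ℕ} (h : hitIndex q P y = hitIndex q P z) : y ≡ z [MOD q] :=
    Nat.ModEq.add_right_cancel' (hitIndex q P y * P) <|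
      (Nat.modEq_zero_iff_dvd.mpr (hdvd y)).trans (Nat.modEq_zero_iff_dvd.mpr (h ▸ hdvd z)).symm
  intro y hy z hz h
  rcases le_total y z with hyz | hzy
  · exact eq_of_modEq_of_odd hq (hodd y hy) (hodd z hz) hyz (hspan y hy z hz) (hmodEq h)
  · exact (eq_of_modEq_of_odd hq (hodd z hz) (hodd y hy) hzy (hspan z hz y hy) (hmodEq h).symm).symm

def IsConstellationStart (P g j r : ℕ) : Prop :=
  r.Coprime P ∧ (r + g).Coprime P ∧ #{x ∈ Ioc r (r + g) | x.Coprime P} = j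

instance (P g j : ℕ) : DecidablePred (IsConstellationStart P g j) :=
  fun _ => inferInstanceAs (Decidable (_ ∧ _))

lemma nCount_eq_card_filter_isConstellationStart (p g j : ℕ) :
    nCount p g j = #{r ∈ Icc 1 (primorial p) | IsConstellationStart (primorial p) g j r} := by
  rw [nCount]
  congr 1
  ext r
  simp only [mem_filter]
  rw [IsConstellationStart]
  exact and_congr_right fun _ => and_congr_right fun hr => exists_matchesGaps_iff hr g j

lemma isConstellationStart_add_mul_iff {P q g s k : ℕ} (hq : q.Prime) (hPq : P.Coprime q)
    (hk : k < q) (hends : s.Coprime P ∧ (s + g).Coprime P) (j : ℕ) :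
    IsConstellationStart (q * P) g j (s + k * P) ↔
      (∀ a ∈ ({s, s + g} : Finset ℕ), hitIndex q P a ≠ k) ∧
        #{a ∈ insert s {x ∈ Ioc s (s + g) | x.Coprime P} | hitIndex q P a ≠ k} = j + 1 := by
  have : NeZero q := ⟨hq.ne_zero⟩
  set F := {x ∈ Ioc s (s + g) | x.Coprime P} with hF
  have hdvd := dvd_add_mul_iff_eq_hitIndex hPq hk
  have hcard : #{y ∈ Ioc s (s + g) | y.Coprime P ∧ ¬ q ∣ y + k * P} =
      #{a ∈ F | hitIndex q P a ≠ k} := by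
    simp only [hF, filter_filter, hdvd, ne_comm]
  have hins : #(insert s {a ∈ F | hitIndex q P a ≠ k}) = #{a ∈ F | hitIndex q P a ≠ k} + 1 :=
    card_insert_of_notMem fun h => (mem_Ioc.mp (mem_filter.mp (mem_filter.mp h).1).1).1.false
  rw [IsConstellationStart, card_filter_coprime_Ioc_add_mul hq, add_right_comm s (k * P) g,
    hq.coprime_add_mul_mul_iff, hq.coprime_add_mul_mul_iff, hcard, filter_insert]
  simp only [hdvd, mem_insert, mem_singleton, forall_eq_or_imp, forall_eq]
  constructor
  · rintro ⟨⟨hks, -⟩, ⟨hksg, -⟩, hc⟩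
    refine ⟨⟨Ne.symm hks, Ne.symm hksg⟩, ?_⟩
    rw [if_pos (Ne.symm hks), hins, hc]
  · rintro ⟨⟨hks, hksg⟩, hc⟩
    rw [if_pos hks, hins, Nat.add_right_cancel_iff] at hc
    exact ⟨⟨hks.symm, hends.1⟩, ⟨hksg.symm, hends.2⟩, hc⟩

theorem card_filter_range_isConstellationStart_add_mul {P q g : ℕ} (hq : q.Prime)
    (hPq : P.Coprime q) (hP : 2 ∣ P) (hg : 0 < g) (hgq : g < 2 * q) (s j : ℕ) :
    #{k ∈ range q | IsConstellationStart (q * P) g j (s + k * P)} =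
      (q - j - 1) * (if IsConstellationStart P g j s then 1 else 0) +
        j * (if IsConstellationStart P g (j + 1) s then 1 else 0) := by
  have hlift (k y : ℕ) : (y + k * P).Coprime (q * P) → y.Coprime P :=
    fun h => ((hq.coprime_add_mul_mul_iff P y k).mp h).2
  by_cases hends : s.Coprime P ∧ (s + g).Coprime P
  swap
  · rw [if_neg fun h => hends ⟨h.1, h.2.1⟩, if_neg fun h => hends ⟨h.1, h.2.1⟩, mul_zero,
      mul_zero, add_zero, card_eq_zero, filter_eq_empty_iff]
    rintro k - ⟨hs, hsg, -⟩
    rw [add_right_comm] at hsg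
    exact hends ⟨hlift k s hs, hlift k (s + g) hsg⟩
  have : NeZero q := ⟨hq.ne_zero⟩
  set F := {x ∈ Ioc s (s + g) | x.Coprime P}
  have hsF : s ∉ F := fun h => (mem_Ioc.mp (mem_filter.mp h).1).1.false
  have hkey (k : ℕ) (hk : k ∈ range q) :=
    isConstellationStart_add_mul_iff hq hPq (mem_range.mp hk) hends j
  have hsgF : s + g ∈ F := mem_filter.mpr ⟨mem_Ioc.mpr ⟨by omega, le_rfl⟩, hends.2⟩
  have hA : ∀ a ∈ insert s F, a.Coprime P ∧ s ≤ a ∧ a ≤ s + g := by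
    intro a ha
    rcases mem_insert.mp ha with rfl | ha
    · exact ⟨hends.1, le_rfl, by omega⟩
    · obtain ⟨haI, hac⟩ := mem_filter.mp ha
      obtain ⟨hsa, has⟩ := mem_Ioc.mp haI
      exact ⟨hac, hsa.le, has⟩
  have hinj : Set.InjOn (hitIndex q P) ↑(insert s F) :=
    hitIndex_injOn ((hPq.symm.coprime_dvd_right hP).odd_of_right) hPq
      (fun a ha => ((hA a ha).1.coprime_dvd_right hP).odd_of_right)
      (fun a ha b hb => by have := hA a ha; have := hA b hb; omega)
  have hmaps : Set.MapsTo (hitIndex q P) ↑(insert s F) ↑(range q) :=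
    fun a _ => mem_range.mpr (hitIndex_lt P a)
  rw [filter_congr hkey, card_filter_forall_ne_and_card_filter_ne hinj hmaps
    (insert_subset_insert s (singleton_subset_iff.mpr hsgF)), card_range,
    card_insert_of_notMem hsF, card_pair (by omega)]
  have hstart (n : ℕ) : IsConstellationStart P g n s ↔ #F = n :=
    ⟨fun h => h.2.2, fun h => ⟨hends.1, hends.2, h⟩⟩
  rw [if_congr (hstart j) rfl rfl, if_congr (hstart (j + 1)) rfl rfl]
  split_ifs <;> omega

theorem driving_term_recurrence_general (p p' : ℕ) (hp : p.Prime) (hp' : p'.Prime) (hlt : p < p')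
    (hmin : ∀ q : ℕ, q.Prime → p < q → p' ≤ q)
    (g : ℕ) (hg : 0 < g)
    (j : ℕ) (hglt : g < 2 * p') :
    nCount p' g j = (p' - j - 1) * nCount p g j + j * nCount p g (j + 1) := by
  have htwo : 2 ∣ primorial p := Nat.prime_two.dvd_primorial_iff.mpr hp.two_le
  have hcop : (primorial p).Coprime p' :=
    (hp'.coprime_iff_not_dvd.mpr fun h => (hp'.dvd_primorial_iff.mp h).not_gt hlt).symm
  simp only [nCount_eq_card_filter_isConstellationStart]
  rw [primorial_eq_mul_primorial_of_no_prime_between hp' hlt hmin, card_filter_Icc_one_mul,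
    sum_congr rfl fun s _ =>
      card_filter_range_isConstellationStart_add_mul hp' hcop htwo hg hglt s j,
    sum_add_distrib, ← mul_sum, ← mul_sum, ← card_filter, ← card_filter]

theorem driving_term_recurrence (p p' : ℕ) (hp : p.Prime) (hp' : p'.Prime) (hlt : p < p')
    (hmin : ∀ q : ℕ, q.Prime → p < q → p' ≤ q)
    (g : ℕ) (hg : 0 < g) (heven : Even g)
    (j : ℕ) (hj : 1 ≤ j) (hjlt : j + 1 < p' - 1) (hglt : g < 2 * p') :
    nCount p' g j = (p' - j - 1) * nCount p g j + j * nCount p g (j + 1) :=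
  driving_term_recurrence_general p p' hp hp' hlt hmin g hg j hglt
end

section
/- Fix an integer J ≥ 1, a prime p_0, and a vector w_0 ∈ ℝ^J. Then the first component of M_J^k · w_0 converges, as k → ∞, to the sum of the components of w_0: lim_{k→∞} (M_J^k · w_0)_1 = Σ_{j=1}^{J} (w_0)_j. -/
/-!
Every `M_J(p)` has column sums `1`, so `∑ᵢ (M_J^k w₀)ᵢ = ∑ⱼ (w₀)ⱼ` for all `k`, and it suffices
that every component other than the first tends to `0`. As `M_J(p)` is upper bidiagonal, the
component `xₖ` of index `i ≥ 1` (counted from `0`) obeys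
`x_{k+1} = (1 - tₖ) xₖ + tₖ · (i + 1)/i · yₖ` with `tₖ = i/(q_k - 2)`, where `yₖ` is the next
component, which tends to `0` by downward induction on `i`. Since `∑ 1/q_k = ∞` (the sum of the
reciprocals of the primes diverges), `∏ (1 - tₖ) = 0`, and this damping forces `xₖ → 0`.
-/

/-- The `J × J` system matrix `M_J(p)`: its `(1,1)` entry is `1`, its `(i,i)` entry is
`(p - i - 1)/(p - 2)` for `2 ≤ i ≤ J`, its `(i, i+1)` entry is `i/(p - 2)` for
`1 ≤ i ≤ J - 1`, and all other entries are `0` (stated here with `0`-based indices). -/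
noncomputable def Mmat (J : ℕ) (p : ℝ) : Matrix (Fin J) (Fin J) ℝ :=
  Matrix.of fun i k =>
    if (k : ℕ) = (i : ℕ) + 1 then (((i : ℕ) : ℝ) + 1) / (p - 2)
    else if i = k then (if (i : ℕ) = 0 then 1 else (p - ((i : ℕ) : ℝ) - 2) / (p - 2))
    else 0

/-- `prodMat J p0 k = M_J(q_k) ⬝ M_J(q_{k-1}) ⋯ M_J(q_1)`, where
`q_1 < q_2 < …` enumerate the primes greater than `p0`. -/
noncomputable def prodMat (J : ℕ) (p0 : ℕ) : ℕ → Matrix (Fin J) (Fin J) ℝ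
  | 0 => 1
  | k + 1 => Mmat J ((Nat.nth (fun n => n.Prime ∧ p0 < n) k : ℕ) : ℝ) * prodMat J p0 k

open Filter Topology Finset Matrix

/-- `nthPrimeAbove p0 k` is the prime `q_{k+1}` of the enumeration `q_1 < q_2 < ⋯` of the
primes greater than `p0`. -/
noncomputable def nthPrimeAbove (p0 : ℕ) : ℕ → ℕ :=
  Nat.nth fun n => n.Prime ∧ p0 < n

lemma infinite_setOf_prime_and_lt (p0 : ℕ) : {n | n.Prime ∧ p0 < n}.Infinite :=
  (Nat.infinite_setOfPred_prime.sdiff (Set.finite_le_nat p0)).mono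
    fun _ h => ⟨h.1, not_le.1 h.2⟩

lemma nthPrimeAbove_prime_and_lt (p0 k : ℕ) :
    (nthPrimeAbove p0 k).Prime ∧ p0 < nthPrimeAbove p0 k :=
  Nat.nth_mem_of_infinite (infinite_setOf_prime_and_lt p0) k

lemma two_lt_nthPrimeAbove {p0 : ℕ} (hp0 : 2 ≤ p0) (k : ℕ) : 2 < (nthPrimeAbove p0 k : ℝ) := by
  exact_mod_cast hp0.trans_lt (nthPrimeAbove_prime_and_lt p0 k).2

lemma tendsto_nthPrimeAbove (p0 : ℕ) : Tendsto (nthPrimeAbove p0) atTop atTop :=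
  (Nat.nth_strictMono (infinite_setOf_prime_and_lt p0)).tendsto_atTop

lemma not_summable_one_div_nthPrimeAbove (p0 : ℕ) :
    ¬ Summable fun k => 1 / (nthPrimeAbove p0 k : ℝ) := by
  set s := {n | n.Prime ∧ p0 < n}
  intro h
  have hs : Summable (s.indicator fun n => 1 / (n : ℝ)) := by
    refine (Function.Injective.summable_iff (f := s.indicator fun n => 1 / (n : ℝ))
      (Nat.nth_strictMono (infinite_setOf_prime_and_lt p0)).injective fun n hn => ?_).1 ?_
    · rw [Nat.range_nth_of_infinite (infinite_setOf_prime_and_lt p0)] at hn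
      exact Set.indicator_of_notMem hn _
    · exact h.congr fun k =>
        (Set.indicator_of_mem (s := s) (nthPrimeAbove_prime_and_lt p0 k)
          fun n : ℕ => 1 / (n : ℝ)).symm
  have hset : {n | n ≤ p0}ᶜ ∩ {n | n.Prime} = s := by
    ext n
    simp [s, and_comm]
  apply not_summable_one_div_on_primes
  rwa [← (Set.finite_le_nat p0).summable_compl_iff, summable_subtype_iff_indicator,
    Set.indicator_indicator, hset]

theorem tendsto_prod_Ico_one_sub_of_not_summable {t : ℕ → ℝ} (ht0 : ∀ k, 0 ≤ t k)
    (ht : ¬ Summable t) {m : ℕ} (ht1 : ∀ k ≥ m, t k ≤ 1) :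
    Tendsto (fun n => ∏ k ∈ Ico m n, (1 - t k)) atTop (𝓝 0) := by
  have htail : Tendsto (fun n => ∑ k ∈ Ico m n, t k) atTop atTop := by
    have h := (not_summable_iff_tendsto_nat_atTop_of_nonneg ht0).1 ht
    refine (tendsto_atTop_add_const_right _ (-∑ k ∈ range m, t k) h).congr' ?_
    filter_upwards [eventually_ge_atTop m] with n hn
    rw [sum_Ico_eq_sub _ hn, sub_eq_add_neg]
  refine tendsto_of_tendsto_of_tendsto_of_le_of_le' tendsto_const_nhds
    (Real.tendsto_exp_atBot.comp (tendsto_neg_atTop_atBot.comp htail)) ?_ ?_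
  · filter_upwards [eventually_ge_atTop m] with n hn
    exact prod_nonneg fun k hk => sub_nonneg.2 (ht1 k (mem_Ico.1 hk).1)
  · filter_upwards with n
    calc ∏ k ∈ Ico m n, (1 - t k) ≤ ∏ k ∈ Ico m n, Real.exp (-t k) :=
          prod_le_prod (fun k hk => sub_nonneg.2 (ht1 k (mem_Ico.1 hk).1))
            fun k _ => by linarith [Real.add_one_le_exp (-t k)]
      _ = Real.exp (-∑ k ∈ Ico m n, t k) := by rw [← Real.exp_sum, sum_neg_distrib]

theorem tendsto_zero_of_le_one_sub_mul_add_mul {u t e : ℕ → ℝ} (hu : ∀ k, 0 ≤ u k)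
    (ht0 : ∀ k, 0 ≤ t k) (ht : ¬ Summable t) (he : Tendsto e atTop (𝓝 0))
    (hrec : ∀ᶠ k in atTop, t k ≤ 1 ∧ u (k + 1) ≤ (1 - t k) * u k + t k * e k) :
    Tendsto u atTop (𝓝 0) := by
  refine tendsto_order.2 ⟨fun a ha => .of_forall fun k => ha.trans_le (hu k), fun a ha => ?_⟩
  obtain ⟨m, hm⟩ := eventually_atTop.1 (hrec.and (he.eventually (gt_mem_nhds (half_pos ha))))
  -- once `e < a / 2`, the excess `u - a / 2` is damped by the factors `1 - t k`
  have hexcess : ∀ n ≥ m, u n - a / 2 ≤ (∏ k ∈ Ico m n, (1 - t k)) * u m := by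
    intro n hn
    induction n, hn using Nat.le_induction with
    | base => rw [Ico_self, prod_empty, one_mul]; linarith
    | succ n hn ih =>
      obtain ⟨⟨ht1, hun⟩, hen⟩ := hm n hn
      rw [prod_Ico_succ_top hn, mul_right_comm]
      nlinarith [ht0 n]
  have hprod := (tendsto_prod_Ico_one_sub_of_not_summable ht0 ht
    fun k hk => (hm k hk).1.1).mul_const (u m)
  rw [zero_mul] at hprod
  filter_upwards [eventually_ge_atTop m, hprod.eventually (gt_mem_nhds (half_pos ha))]
    with n hn hPn
  linarith [hexcess n hn]

def nextEntry {J : ℕ} (v : Fin J → ℝ) (i : Fin J) : ℝ :=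
  if h : (i : ℕ) + 1 < J then v ⟨i + 1, h⟩ else 0

lemma Mmat_apply {J : ℕ} (p : ℝ) (i j : Fin J) :
    Mmat J p i j = (if (j : ℕ) = i + 1 then ((i : ℝ) + 1) / (p - 2) else 0)
      + if i = j then (if (i : ℕ) = 0 then 1 else (p - i - 2) / (p - 2)) else 0 := by
  by_cases h : (j : ℕ) = i + 1
  · have : i ≠ j := fun e => by simp [e] at h
    simp [Mmat, h, this]
  · simp [Mmat, h]

lemma sum_Mmat_apply {J : ℕ} {p : ℝ} (hp : p ≠ 2) (j : Fin J) : ∑ i, Mmat J p i j = 1 := by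
  simp only [Mmat_apply, sum_add_distrib, sum_ite_eq', mem_univ, if_true]
  rcases j with ⟨_ | j, hj⟩
  · simp
  · rw [sum_eq_single ⟨j, by omega⟩]
    · have : p - 2 ≠ 0 := sub_ne_zero.2 hp
      simp only [↓reduceIte, Nat.add_eq_zero_iff, one_ne_zero, and_false, Nat.cast_add,
        Nat.cast_one]
      field_simp
      ring
    · intro b _ hb; simp [Fin.ext_iff] at hb ⊢; omega
    · simp

lemma Mmat_mulVec_apply {J : ℕ} {p : ℝ} (hp : p ≠ 2) (v : Fin J → ℝ) {i : Fin J}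
    (hi : (i : ℕ) ≠ 0) :
    (Mmat J p *ᵥ v) i = (1 - i / (p - 2)) * v i + (i + 1) / (p - 2) * nextEntry v i := by
  have hp' : p - 2 ≠ 0 := sub_ne_zero.2 hp
  simp only [mulVec, dotProduct, Mmat_apply, add_mul, sum_add_distrib, ite_mul, zero_mul,
    sum_ite_eq, mem_univ, if_true, hi, if_false, nextEntry]
  split_ifs with h
  · rw [sum_eq_single ⟨i + 1, h⟩]
    · simp only [↓reduceIte]
      field_simp
      ring
    · intro b _ hb; simp [Fin.ext_iff] at hb ⊢; omega
    · simp
  · rw [sum_eq_zero]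
    · field_simp; ring
    · intro b _; simp; omega

theorem Matrix.sum_mulVec_of_sum_col_eq_one {m n R : Type*} [Fintype m] [Fintype n]
    [NonAssocSemiring R] {A : Matrix m n R} (hA : ∀ j, ∑ i, A i j = 1) (v : n → R) :
    ∑ i, (A *ᵥ v) i = ∑ j, v j := by
  simp only [mulVec, dotProduct]
  rw [sum_comm]
  simp only [← sum_mul, hA, one_mul]

lemma prodMat_succ_mulVec (J p0 k : ℕ) (v : Fin J → ℝ) :
    prodMat J p0 (k + 1) *ᵥ v = Mmat J (nthPrimeAbove p0 k) *ᵥ (prodMat J p0 k *ᵥ v) := by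
  rw [prodMat, ← mulVec_mulVec]
  rfl

lemma sum_prodMat_mulVec {J p0 : ℕ} (hp0 : 2 ≤ p0) (v : Fin J → ℝ) (k : ℕ) :
    ∑ i, (prodMat J p0 k *ᵥ v) i = ∑ i, v i := by
  induction k with
  | zero => rw [prodMat, one_mulVec]
  | succ k ih =>
    rw [prodMat_succ_mulVec, sum_mulVec_of_sum_col_eq_one
      (sum_Mmat_apply (two_lt_nthPrimeAbove hp0 k).ne'), ih]

theorem tendsto_prodMat_mulVec_apply {J p0 : ℕ} (hp0 : 2 ≤ p0) (v : Fin J → ℝ) (i : Fin J)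
    (hi : (i : ℕ) ≠ 0) : Tendsto (fun k => (prodMat J p0 k *ᵥ v) i) atTop (𝓝 0) := by
  set q : ℕ → ℝ := fun k => nthPrimeAbove p0 k
  have hq (k : ℕ) : 0 < q k - 2 := sub_pos.2 (two_lt_nthPrimeAbove hp0 k)
  have hi1 : (1 : ℝ) ≤ i := by exact_mod_cast Nat.one_le_iff_ne_zero.2 hi
  have hnext : Tendsto (fun k => nextEntry (prodMat J p0 k *ᵥ v) i) atTop (𝓝 0) := by
    unfold nextEntry
    split_ifs with h
    · exact tendsto_prodMat_mulVec_apply hp0 v ⟨i + 1, h⟩ (Nat.succ_ne_zero _)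
    · exact tendsto_const_nhds
  rw [tendsto_zero_iff_abs_tendsto_zero]
  refine tendsto_zero_of_le_one_sub_mul_add_mul (t := fun k => i / (q k - 2))
    (e := fun k => (i + 1) / i * |nextEntry (prodMat J p0 k *ᵥ v) i|)
    (fun k => abs_nonneg _) (fun k => (div_pos (by positivity) (hq k)).le) ?_ ?_ ?_
  · refine fun hs => not_summable_one_div_nthPrimeAbove p0 <|
      hs.of_nonneg_of_le (fun k => by positivity) fun k => ?_
    calc 1 / q k ≤ 1 / (q k - 2) := one_div_le_one_div_of_le (hq k) (by linarith)
      _ ≤ i / (q k - 2) := div_le_div_of_nonneg_right hi1 (hq k).le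
  · simpa using hnext.abs.const_mul ((i + 1) / i : ℝ)
  · filter_upwards [(tendsto_natCast_atTop_atTop.comp
      (tendsto_nthPrimeAbove p0)).eventually_ge_atTop ((i : ℝ) + 2)] with k (hk : (i : ℝ) + 2 ≤ q k)
    have hk' : (i : ℝ) / (q k - 2) ≤ 1 := (div_le_one (hq k)).2 (by linarith)
    refine ⟨hk', ?_⟩
    dsimp only [Function.comp_apply]
    rw [prodMat_succ_mulVec, Mmat_mulVec_apply (two_lt_nthPrimeAbove hp0 k).ne' _ hi]
    refine (abs_add_le _ _).trans_eq ?_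
    rw [abs_mul, abs_mul, abs_of_nonneg (sub_nonneg.2 hk'),
      abs_of_nonneg (div_pos (by positivity) (hq k)).le]
    field_simp
termination_by J - i

theorem first_component_tendsto (J : ℕ) (hJ : 1 ≤ J) (p0 : ℕ) (hp0 : p0.Prime)
    (w0 : Fin J → ℝ) :
    Filter.Tendsto (fun k => (prodMat J p0 k).mulVec w0 ⟨0, hJ⟩) Filter.atTop
      (nhds (∑ j, w0 j)) := by
  set z : Fin J := ⟨0, hJ⟩
  have hz (k : ℕ) : (prodMat J p0 k *ᵥ w0) z
      = ∑ j, w0 j - ∑ i ∈ univ.erase z, (prodMat J p0 k *ᵥ w0) i := by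
    rw [← sum_prodMat_mulVec hp0.two_le w0 k, ← add_sum_erase _ _ (mem_univ z),
      add_sub_cancel_right]
  simp_rw [hz]
  simpa only [sum_const_zero, sub_zero] using tendsto_const_nhds.sub <|
    tendsto_finsetSum (univ.erase z) fun i hi =>
      tendsto_prodMat_mulVec_apply hp0.two_le w0 i fun h => ne_of_mem_erase hi (Fin.ext h : i = z)
end

section
/- For each g in {6, 12, 18, 24}, the ratio N_p(g)/N_p(2) of the number of gaps equal to g in the cycle of gaps 𝒢(p#) to the number of gaps equal to 2 in 𝒢(p#) converges to 2 as p → ∞ through the primes. -/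
/-!
Counting residues `r` mod `p#` such that `r + t` is a totative for every `t ∈ T` is
multiplicative by the Chinese remainder theorem, with local factor `q - #(T mod q)` at each
prime `q ≤ p`. Since `2 ∣ p#`, the gaps equal to `2` are exactly the pairs `r, r + 2` of
totatives, so `N_p(2)` is the count for `{0, 2}`. A pair `r, r + g` of totatives is either a
gap of `𝒢(p#)` or has a totative `r + t` in between, so `N_p(g)` lies between the count for
`{0, g}` and that count minus the counts for `{0, t, g}`, `0 < t < g`. When `2` and `3` are
the only prime factors of `g`, the count for `{0, g}` is exactly twice the count for `{0, 2}`,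
whereas each count for `{0, t, g}` is at most `g# ∏_{g < q ≤ p} (q - 3)/(q - 2)` times it, and
this product tends to `0` because `∑ 1/q` diverges.
-/

open Finset

open Filter Topology

noncomputable def coprimeShiftCount (T : Finset ℕ) (n : ℕ) : ℕ :=
  Nat.card {x : ZMod n // ∀ t ∈ T, IsUnit (x + t)}

lemma coprimeShiftCount_one (T : Finset ℕ) : coprimeShiftCount T 1 = 1 := by
  rw [coprimeShiftCount, Nat.card_eq_one_iff_unique]
  exact ⟨inferInstance, ⟨⟨0, fun _ _ => isUnit_of_subsingleton _⟩⟩⟩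

lemma coprimeShiftCount_mul (T : Finset ℕ) {m n : ℕ} (h : m.Coprime n) :
    coprimeShiftCount T (m * n) = coprimeShiftCount T m * coprimeShiftCount T n := by
  let e := ZMod.chineseRemainder h
  have he : ∀ x : ZMod (m * n), (∀ t ∈ T, IsUnit (x + t)) ↔
      (∀ t ∈ T, IsUnit ((e x).1 + t)) ∧ (∀ t ∈ T, IsUnit ((e x).2 + t)) := fun x => by
    rw [← forall₂_and]
    refine forall₂_congr fun t _ => ?_
    rw [← isUnit_map_iff e, map_add, map_natCast, Prod.isUnit_iff]
    rfl
  rw [coprimeShiftCount, coprimeShiftCount, coprimeShiftCount, ← Nat.card_prod]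
  exact Nat.card_congr ((e.toEquiv.subtypeEquiv he).trans Equiv.subtypeProdEquivProd)

lemma coprimeShiftCount_prod_of_prime (T : Finset ℕ) (s : Finset ℕ) (hs : ∀ q ∈ s, q.Prime) :
    coprimeShiftCount T (∏ q ∈ s, q) = ∏ q ∈ s, coprimeShiftCount T q := by
  induction s using Finset.induction_on with
  | empty => simpa using coprimeShiftCount_one T
  | insert a s ha ih =>
    have hcop : a.Coprime (∏ q ∈ s, q) := Nat.Coprime.prod_right fun q hq =>
      (Nat.coprime_primes (hs a (mem_insert_self a s)) (hs q (mem_insert_of_mem hq))).mpr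
        (ne_of_mem_of_not_mem hq ha).symm
    rw [prod_insert ha, prod_insert ha, coprimeShiftCount_mul T hcop,
      ih fun q hq => hs q (mem_insert_of_mem hq)]

lemma coprimeShiftCount_primorial (T : Finset ℕ) (p : ℕ) :
    coprimeShiftCount T (primorial p) = ∏ q ∈ Nat.primesLE p, coprimeShiftCount T q :=
  coprimeShiftCount_prod_of_prime T _ fun _ => Nat.prime_of_mem_primesLE

lemma coprimeShiftCount_prime (T : Finset ℕ) {q : ℕ} (hq : q.Prime) :
    coprimeShiftCount T q = q - #(T.image (Nat.cast : ℕ → ZMod q)) := by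
  have : Fact q.Prime := ⟨hq⟩
  let S := (T.image (Nat.cast : ℕ → ZMod q)).image Neg.neg
  have hS : ∀ x : ZMod q, (∀ t ∈ T, IsUnit (x + t)) ↔ x ∉ S := fun x => by
    simp [S, isUnit_iff_ne_zero, add_eq_zero_iff_neg_eq']
  rw [coprimeShiftCount, Nat.card_congr (Equiv.subtypeEquivRight hS), Nat.card_eq_fintype_card,
    Fintype.card_subtype_compl, Fintype.card_coe, ZMod.card,
    card_image_of_injective _ neg_injective]

lemma coprimeShiftCount_le (T : Finset ℕ) (n : ℕ) [NeZero n] : coprimeShiftCount T n ≤ n :=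
  (Finite.card_subtype_le _).trans_eq (Nat.card_zmod n)

lemma coprimeShiftCount_prime_of_lt {T : Finset ℕ} {q : ℕ} (hq : q.Prime)
    (hT : ∀ t ∈ T, t < q) :
    coprimeShiftCount T q = q - #T := by
  rw [coprimeShiftCount_prime T hq, card_image_of_injOn fun a ha b hb hab => ?_]
  rwa [ZMod.natCast_eq_natCast_iff', Nat.mod_eq_of_lt (hT a ha), Nat.mod_eq_of_lt (hT b hb)] at hab

lemma coprimeShiftCount_pair_prime (a : ℕ) {q : ℕ} (hq : q.Prime) :
    coprimeShiftCount {0, a} q = if q ∣ a then q - 1 else q - 2 := by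
  rw [coprimeShiftCount_prime _ hq, image_insert, image_singleton, Nat.cast_zero]
  split_ifs with h
  · simp [(ZMod.natCast_eq_zero_iff a q).mpr h]
  · rw [card_pair (Ne.symm ((ZMod.natCast_eq_zero_iff a q).not.mpr h))]

lemma coprimeShiftCount_zero_two_prime_pos {q : ℕ} (hq : q.Prime) :
    0 < coprimeShiftCount {0, 2} q := by
  have := hq.two_le
  rw [coprimeShiftCount_pair_prime 2 hq]
  split_ifs with h
  · omega
  · have : q ≠ 2 := by rintro rfl; exact h dvd_rfl
    omega

lemma ZMod.exists_mem_Icc_natCast_eq {P : ℕ} [NeZero P] (x : ZMod P) :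
    ∃ r ∈ Icc 1 P, (r : ZMod P) = x :=
  ⟨(x - 1).val + 1, mem_Icc.mpr ⟨by omega, (x - 1).val_lt⟩, by simp⟩

lemma card_filter_Icc_natCast {P : ℕ} [NeZero P] (Q : ZMod P → Prop) [DecidablePred Q] :
    #{r ∈ Icc 1 P | Q (r : ℕ)} = Nat.card {x : ZMod P // Q x} := by
  have himage : (Icc 1 P).image (Nat.cast : ℕ → ZMod P) = univ :=
    eq_univ_of_forall fun x => mem_image.mpr (ZMod.exists_mem_Icc_natCast_eq x)
  have hinj : Set.InjOn (Nat.cast : ℕ → ZMod P) (Icc 1 P) := by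
    rw [← card_image_iff, himage, card_univ, ZMod.card, Nat.card_Icc, Nat.add_sub_cancel]
  rw [Nat.card_eq_fintype_card, Fintype.card_subtype, ← himage, filter_image,
    card_image_of_injOn (hinj.mono (filter_subset _ _))]

lemma card_filter_Icc_coprime_add {P : ℕ} (hP : 0 < P) (T : Finset ℕ) :
    #{r ∈ Icc 1 P | ∀ t ∈ T, (r + t).Coprime P} = coprimeShiftCount T P := by
  have : NeZero P := ⟨hP.ne'⟩
  rw [coprimeShiftCount, ← card_filter_Icc_natCast]
  congr 1
  ext r
  simp [← ZMod.isUnit_iff_coprime]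

lemma matchesGaps_singleton {P r g : ℕ} : MatchesGaps P r [g] ↔ IsNextTot P r (r + g) := by
  simp [MatchesGaps]

lemma isNextTot_add_two_iff {P r : ℕ} (hP : 2 ∣ P) (hr : r.Coprime P) :
    IsNextTot P r (r + 2) ↔ (r + 2).Coprime P := by
  refine ⟨fun h => h.2.1, fun h => ⟨by omega, h, fun x hrx hx hxP => ?_⟩⟩
  have hodd : ∀ {y : ℕ}, y.Coprime P → Odd y := fun hy =>
    Nat.coprime_two_right.mp (hy.coprime_dvd_right hP)
  obtain ⟨a, rfl⟩ := hodd hr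
  obtain ⟨b, rfl⟩ := hodd hxP
  omega

lemma exists_coprime_add_of_not_isNextTot {P r g : ℕ} (hg : 0 < g) (hrg : (r + g).Coprime P)
    (h : ¬ IsNextTot P r (r + g)) : ∃ t ∈ Ioo 0 g, (r + t).Coprime P := by
  simp only [IsNextTot, not_and, not_forall, not_not] at h
  obtain ⟨x, hrx, hx, hxP⟩ := h (by omega) hrg
  exact ⟨x - r, mem_Ioo.mpr ⟨by omega, by omega⟩, by rwa [Nat.add_sub_cancel' hrx.le]⟩

lemma Ncount_two_eq_coprimeShiftCount {p : ℕ} (hp : 2 ≤ p) :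
    Ncount p [2] = coprimeShiftCount {0, 2} (primorial p) := by
  have h2 : 2 ∣ primorial p := Nat.prime_two.dvd_primorial_iff.mpr hp
  rw [← card_filter_Icc_coprime_add (primorial_pos p), Ncount]
  congr 1
  ext r
  simp only [mem_filter, matchesGaps_singleton, mem_insert, mem_singleton, forall_eq_or_imp,
    forall_eq, add_zero]
  exact and_congr_right fun _ => ⟨fun ⟨hr, h⟩ => ⟨hr, h.2.1⟩,
    fun ⟨hr, h⟩ => ⟨hr, (isNextTot_add_two_iff h2 hr).mpr h⟩⟩

lemma Ncount_le_coprimeShiftCount (p g : ℕ) :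
    Ncount p [g] ≤ coprimeShiftCount {0, g} (primorial p) := by
  rw [← card_filter_Icc_coprime_add (primorial_pos p), Ncount]
  refine card_le_card fun r => ?_
  simp only [mem_filter, matchesGaps_singleton, mem_insert, mem_singleton, forall_eq_or_imp,
    forall_eq, add_zero]
  exact fun ⟨hr, hrP, h⟩ => ⟨hr, hrP, h.2.1⟩

lemma coprimeShiftCount_pair_le_Ncount_add_sum (p : ℕ) {g : ℕ} (hg : 0 < g) :
    coprimeShiftCount {0, g} (primorial p) ≤
      Ncount p [g] + ∑ t ∈ Ioo 0 g, coprimeShiftCount {0, t, g} (primorial p) := by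
  simp only [← card_filter_Icc_coprime_add (primorial_pos p), Ncount]
  refine (card_le_card fun r => ?_).trans ((card_union_le _ _).trans
    (Nat.add_le_add_left card_biUnion_le _))
  simp only [mem_filter, matchesGaps_singleton, mem_insert, mem_singleton, forall_eq_or_imp,
    forall_eq, add_zero, mem_union, mem_biUnion]
  rintro ⟨hr, hrP, hrgP⟩
  by_cases h : IsNextTot (primorial p) r (r + g)
  · exact Or.inl ⟨hr, hrP, h⟩
  · obtain ⟨t, ht, hrtP⟩ := exists_coprime_add_of_not_isNextTot hg hrgP h
    exact Or.inr ⟨t, ht, hr, hrP, hrtP, hrgP⟩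

lemma Ncount_two_pos {p : ℕ} (hp : 2 ≤ p) : 0 < Ncount p [2] := by
  rw [Ncount_two_eq_coprimeShiftCount hp, coprimeShiftCount_primorial]
  exact prod_pos fun q hq => coprimeShiftCount_zero_two_prime_pos (Nat.prime_of_mem_primesLE hq)

lemma coprimeShiftCount_pair_eq_two_mul {p g : ℕ} (hp : 3 ≤ p) (hg : g.primeFactors = {2, 3}) :
    coprimeShiftCount {0, g} (primorial p) = 2 * coprimeShiftCount {0, 2} (primorial p) := by
  have hg0 : g ≠ 0 := (Nat.mem_primeFactors.mp (hg ▸ mem_insert_self 2 {3})).2.2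
  have hdvd : ∀ {q : ℕ}, q.Prime → (q ∣ g ↔ q = 2 ∨ q = 3) := fun {q} hq => by
    simpa [hg, hq] using (Nat.mem_primeFactors_of_ne_zero hg0 (p := q)).symm
  have h3 : 3 ∈ Nat.primesLE p := Nat.mem_primesLE.mpr ⟨hp, Nat.prime_three⟩
  have hrest : ∀ q ∈ (Nat.primesLE p).erase 3,
      coprimeShiftCount {0, g} q = coprimeShiftCount {0, 2} q := fun q hq => by
    obtain ⟨hq3, hmem⟩ := mem_erase.mp hq
    have hq := Nat.prime_of_mem_primesLE hmem
    simp only [coprimeShiftCount_pair_prime _ hq, hdvd hq,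
      Nat.prime_dvd_prime_iff_eq hq Nat.prime_two, hq3, or_false]
  rw [coprimeShiftCount_primorial, coprimeShiftCount_primorial, ← mul_prod_erase _ _ h3,
    ← mul_prod_erase _ _ h3, prod_congr rfl hrest, coprimeShiftCount_pair_prime _ Nat.prime_three,
    coprimeShiftCount_pair_prime _ Nat.prime_three, if_pos ((hdvd Nat.prime_three).mpr (by simp)),
    if_neg (by norm_num)]
  ring

lemma prod_primesLE_filter_le_primorial (p g : ℕ) :
    ∏ q ∈ Nat.primesLE p with ¬ g < q, q ≤ primorial g :=
  prod_le_prod_of_subset_of_one_le'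
    (fun q hq => by
      rw [mem_filter, Nat.mem_primesLE] at hq
      exact Nat.mem_primesLE.mpr ⟨not_lt.mp hq.2, hq.1.2⟩)
    fun q hq _ => (Nat.prime_of_mem_primesLE hq).one_le

lemma sub_three_div_sub_two_nonneg {x : ℝ} (hx : 3 ≤ x) : 0 ≤ (x - 3) / (x - 2) :=
  div_nonneg (by linarith) (by linarith)

lemma coprimeShiftCount_triple_prime_le {q t g : ℕ} (hq : q.Prime) (ht : 0 < t) (htg : t < g) :
    (coprimeShiftCount {0, t, g} q : ℝ) ≤
      (if g < q then ((q : ℝ) - 3) / (q - 2) else q) * coprimeShiftCount {0, 2} q := by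
  split_ifs with hgq
  · have h3 : #({0, t, g} : Finset ℕ) = 3 :=
      card_eq_three.mpr ⟨0, t, g, by omega, by omega, by omega, rfl⟩
    have hq2 : ¬ q ∣ 2 := fun h => by have := Nat.le_of_dvd two_pos h; omega
    have hq2R : (q : ℝ) - 2 ≠ 0 := by
      have : (2 : ℝ) < q := by exact_mod_cast (by omega : 2 < q)
      linarith
    rw [coprimeShiftCount_prime_of_lt hq (by simp; omega), h3, coprimeShiftCount_pair_prime 2 hq,
      if_neg hq2, Nat.cast_sub (by omega), Nat.cast_sub (by omega), Nat.cast_ofNat, Nat.cast_ofNat,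
      div_mul_cancel₀ _ hq2R]
  · have : NeZero q := ⟨hq.ne_zero⟩
    have hle : (coprimeShiftCount {0, t, g} q : ℝ) ≤ q := by
      exact_mod_cast coprimeShiftCount_le _ q
    have hpos : (1 : ℝ) ≤ coprimeShiftCount {0, 2} q := by
      exact_mod_cast coprimeShiftCount_zero_two_prime_pos hq
    nlinarith

lemma coprimeShiftCount_triple_le {p t g : ℕ} (ht : 0 < t) (htg : t < g) :
    (coprimeShiftCount {0, t, g} (primorial p) : ℝ) ≤
      primorial g * (∏ q ∈ Nat.primesLE p with g < q, ((q : ℝ) - 3) / (q - 2)) *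
        coprimeShiftCount {0, 2} (primorial p) := by
  have hsmall : ∏ q ∈ Nat.primesLE p with ¬ g < q, (q : ℝ) ≤ primorial g := by
    rw [← Nat.cast_prod]
    exact_mod_cast prod_primesLE_filter_le_primorial p g
  simp only [coprimeShiftCount_primorial, Nat.cast_prod]
  calc ∏ q ∈ Nat.primesLE p, (coprimeShiftCount {0, t, g} q : ℝ)
      ≤ ∏ q ∈ Nat.primesLE p, (if g < q then ((q : ℝ) - 3) / (q - 2) else q) *
          coprimeShiftCount {0, 2} q :=
        prod_le_prod (fun _ _ => by positivity) fun q hq =>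
          coprimeShiftCount_triple_prime_le (Nat.prime_of_mem_primesLE hq) ht htg
    _ = (∏ q ∈ Nat.primesLE p with g < q, ((q : ℝ) - 3) / (q - 2)) *
          (∏ q ∈ Nat.primesLE p with ¬ g < q, (q : ℝ)) *
          ∏ q ∈ Nat.primesLE p, (coprimeShiftCount {0, 2} q : ℝ) := by
        rw [prod_mul_distrib, prod_ite]
    _ ≤ _ := by
        rw [mul_comm (∏ q ∈ _ with _, _ / _)]
        gcongr
        exact prod_nonneg fun q hq => sub_three_div_sub_two_nonneg <| by
          have := (mem_filter.mp hq).2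
          exact_mod_cast (by omega : 3 ≤ q)

lemma tendsto_sum_primesLE_one_div :
    Tendsto (fun p => ∑ q ∈ Nat.primesLE p, (1 : ℝ) / q) atTop atTop := by
  have hnonneg : ∀ n, 0 ≤ Set.indicator {q | q.Prime} (fun n : ℕ => (1 : ℝ) / n) n :=
    Set.indicator_nonneg fun _ _ => by positivity
  refine (((not_summable_iff_tendsto_nat_atTop_of_nonneg hnonneg).mp
    not_summable_one_div_on_primes).comp (tendsto_add_atTop_nat 1)).congr fun p => ?_
  simp [Nat.primesLE_eq_filter_range, sum_filter, Set.indicator_apply]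

lemma tendsto_sum_primesLE_filter_one_div (g : ℕ) :
    Tendsto (fun p => ∑ q ∈ Nat.primesLE p with g < q, (1 : ℝ) / q) atTop atTop := by
  refine tendsto_atTop_mono (fun p => ?_) (tendsto_atTop_add_const_right _
    (-∑ q ∈ range (g + 1), (1 : ℝ) / q) tendsto_sum_primesLE_one_div)
  have hsmall : ∑ q ∈ Nat.primesLE p with ¬ g < q, (1 : ℝ) / q ≤ ∑ q ∈ range (g + 1), (1 : ℝ) / q :=
    sum_le_sum_of_subset_of_nonneg (fun q hq => mem_range.mpr (by
      have := (mem_filter.mp hq).2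
      omega)) fun _ _ _ => by positivity
  rw [← sum_filter_add_sum_filter_not (Nat.primesLE p) (g < ·)]
  linarith

lemma sub_three_div_sub_two_le_exp {x : ℝ} (hx : 2 < x) :
    (x - 3) / (x - 2) ≤ Real.exp (-(1 / x)) := by
  have hx2 : x - 2 ≠ 0 := by linarith
  calc (x - 3) / (x - 2) = -(1 / (x - 2)) + 1 := by field_simp; ring
    _ ≤ Real.exp (-(1 / (x - 2))) := Real.add_one_le_exp _
    _ ≤ Real.exp (-(1 / x)) := by gcongr; linarith

lemma tendsto_prod_primesLE_sub_three_div_sub_two {g : ℕ} (hg : 2 ≤ g) :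
    Tendsto (fun p => ∏ q ∈ Nat.primesLE p with g < q, ((q : ℝ) - 3) / (q - 2)) atTop (𝓝 0) := by
  have h3 : ∀ {q : ℕ}, g < q → (3 : ℝ) ≤ q := fun hq => by exact_mod_cast (by omega : 3 ≤ _)
  have hnonneg : ∀ p, ∀ q ∈ {q ∈ Nat.primesLE p | g < q}, 0 ≤ ((q : ℝ) - 3) / (q - 2) :=
    fun _ _ hq => sub_three_div_sub_two_nonneg (h3 (mem_filter.mp hq).2)
  refine squeeze_zero (fun p => prod_nonneg (hnonneg p))
    (fun p => (prod_le_prod (hnonneg p) fun q hq =>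
      sub_three_div_sub_two_le_exp (by linarith [h3 (mem_filter.mp hq).2])).trans_eq ?_)
    (Real.tendsto_exp_atBot.comp (tendsto_neg_atTop_atBot.comp
      (tendsto_sum_primesLE_filter_one_div g)))
  rw [Function.comp_apply, Function.comp_apply, ← sum_neg_distrib, Real.exp_sum]

lemma Ncount_le_two_mul_Ncount_two {p g : ℕ} (hp : 3 ≤ p) (hg : g.primeFactors = {2, 3}) :
    Ncount p [g] ≤ 2 * Ncount p [2] := by
  rw [Ncount_two_eq_coprimeShiftCount (by omega), ← coprimeShiftCount_pair_eq_two_mul hp hg]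
  exact Ncount_le_coprimeShiftCount p g

lemma two_mul_Ncount_two_le {p g : ℕ} (hp : 3 ≤ p) (hg : g.primeFactors = {2, 3}) :
    2 * (Ncount p [2] : ℝ) ≤ Ncount p [g] + #(Ioo 0 g) * primorial g *
      (∏ q ∈ Nat.primesLE p with g < q, ((q : ℝ) - 3) / (q - 2)) * Ncount p [2] := by
  have hg0 : 0 < g := (Nat.le_of_mem_primeFactors (hg ▸ mem_insert_self 2 {3})).trans_lt' two_pos
  have hpair : (coprimeShiftCount {0, g} (primorial p) : ℝ) = 2 * Ncount p [2] := by
    rw [coprimeShiftCount_pair_eq_two_mul hp hg, Ncount_two_eq_coprimeShiftCount (by omega)]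
    push_cast
    ring
  have htriples := sum_le_card_nsmul (Ioo 0 g)
    (fun t => (coprimeShiftCount {0, t, g} (primorial p) : ℝ)) _ fun t ht =>
      coprimeShiftCount_triple_le (p := p) (mem_Ioo.mp ht).1 (mem_Ioo.mp ht).2
  have hlow : (coprimeShiftCount {0, g} (primorial p) : ℝ) ≤
      Ncount p [g] + ∑ t ∈ Ioo 0 g, (coprimeShiftCount {0, t, g} (primorial p) : ℝ) := by
    exact_mod_cast coprimeShiftCount_pair_le_Ncount_add_sum p hg0
  rw [nsmul_eq_mul, ← Ncount_two_eq_coprimeShiftCount (by omega)] at htriples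
  rw [hpair] at hlow
  linarith

theorem tendsto_Ncount_div_Ncount_two {g : ℕ} (hg : g.primeFactors = {2, 3}) :
    Tendsto (fun p => (Ncount p [g] : ℝ) / Ncount p [2]) atTop (𝓝 2) := by
  have hg2 : 2 ≤ g := Nat.le_of_mem_primeFactors (hg ▸ mem_insert_self 2 {3})
  have hN2 : ∀ p ≥ 3, (0 : ℝ) < Ncount p [2] := fun p hp => by
    exact_mod_cast Ncount_two_pos (by omega)
  have hlow := tendsto_const_nhds (x := (2 : ℝ)).sub
    ((tendsto_prod_primesLE_sub_three_div_sub_two hg2).const_mul (#(Ioo 0 g) * primorial g : ℝ))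
  rw [mul_zero, sub_zero] at hlow
  refine tendsto_of_tendsto_of_tendsto_of_le_of_le' hlow tendsto_const_nhds
    ((eventually_ge_atTop 3).mono fun p hp => ?_) ((eventually_ge_atTop 3).mono fun p hp => ?_)
  · rw [le_div_iff₀ (hN2 p hp)]
    linarith [two_mul_Ncount_two_le hp hg]
  · rw [div_le_iff₀ (hN2 p hp)]
    exact_mod_cast Ncount_le_two_mul_Ncount_two hp hg

theorem ratio_tendsto_two : ∀ g ∈ ({6, 12, 18, 24} : Finset ℕ),
    Filter.Tendsto (fun p : ℕ => (Ncount p [g] : ℝ) / (Ncount p [2] : ℝ))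
      (Filter.atTop ⊓ Filter.principal {p : ℕ | p.Prime}) (nhds 2) := by
  intro g hg
  refine (tendsto_Ncount_div_Ncount_two ?_).mono_left inf_le_left
  fin_cases hg <;> simp [Nat.primeFactors]
end
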